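/- arXiv:1011.3645 — 3 statements merged into one kernel-verified Lean document; each statement's English description precedes it below -/
import Mathlib

section
/- Let H^ε be a self-adjoint operator on a Hilbert space ℋ, P an orthogonal projection, E_max ∈ ℝ, and C, ε₀ > 0 such that ‖[P, H^ε] χ_{(-∞,E_max]}(H^ε)‖ ≤ Cε³ for ε < ε₀. Then for every normalized ψ ∈ Ran(χ_{(-∞,E_max]}(H^ε)) ∩ Ran(P) ∩ D(H^ε) and all t ∈ ℝ, ‖(1-P) e^{-iH^ε t} ψ‖ ≤ Cε³|t|. -/
/-!
Pass to the interaction picture: for a bounded observable `B`, the curve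
`s ↦ e^{iHs} B e^{-iHs} x` has velocity `i e^{iHs} [H, B] e^{-iHs} x`. Since `e^{iHs}` is unitary,
the mean value inequality bounds `‖B e^{-iHt} x - e^{-iHt} B x‖` by `|t|` times the largest size
of `[H, B]` along the orbit. For `B = 1 - P` and `x = ψ` the second term vanishes, and since the
orbit of `ψ` stays in `Ran χ`, the commutator `[H, 1 - P] = [P, H]` may be replaced by `[P, H] χ`.
-/

open ContinuousLinearMap NormedSpace
open Complex (I)
open scoped InnerProductSpace

section Algebra

variable {𝔸 : Type*} [NormedRing 𝔸] [NormedAlgebra ℂ 𝔸] [CompleteSpace 𝔸]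

lemma exp_smul_mul_exp_neg_smul (c : ℂ) (a : 𝔸) : exp (c • a) * exp ((-c) • a) = 1 := by
  let : NormedAlgebra ℚ 𝔸 := .restrictScalars ℚ ℂ 𝔸
  rw [← exp_add_of_commute (((Commute.refl a).smul_left c).smul_right (-c)), ← add_smul,
    add_neg_cancel, zero_smul, exp_zero]

lemma hasDerivAt_exp_mul_ofReal_smul (c : ℂ) (a : 𝔸) (s : ℝ) :
    HasDerivAt (fun u : ℝ => exp ((c * u) • a)) (c • (exp ((c * s) • a) * a)) s := by
  have key : ∀ u : ℝ, (c * u) • a = u • c • a := fun u => by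
    rw [← smul_assoc, Complex.real_smul, mul_comm]
  simpa only [key, mul_smul_comm] using hasDerivAt_exp_smul_const (c • a) s

lemma hasDerivAt_exp_conj (a b : 𝔸) (s : ℝ) :
    HasDerivAt (fun u : ℝ => exp ((I * u) • a) * b * exp ((-(I * u)) • a))
      (I • (exp ((I * s) • a) * (a * b - b * a) * exp ((-(I * s)) • a))) s := by
  have hU := hasDerivAt_exp_mul_ofReal_smul (-I) a s
  simp only [neg_mul] at hU
  refine (((hasDerivAt_exp_mul_ofReal_smul I a s).mul_const b).mul hU).congr_deriv ?_
  have hUa : exp ((-(I * s)) • a) * a = a * exp ((-(I * s)) • a) :=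
    ((Commute.refl a).smul_left _).exp_left.eq
  rw [hUa]
  simp only [mul_sub, sub_mul, smul_sub, smul_mul_assoc, mul_smul_comm, mul_assoc, neg_smul,
    mul_neg]
  abel

end Algebra

lemma Commute.apply_exp_smul_apply_eq_self {E : Type*} [NormedAddCommGroup E] [NormedSpace ℂ E]
    [CompleteSpace E] {H χ : E →L[ℂ] E} (h : Commute H χ) (c : ℂ) {x : E} (hx : χ x = x) :
    χ (NormedSpace.exp (c • H) x) = NormedSpace.exp (c • H) x := by
  rw [← mul_apply_eq_comp, ← (h.smul_left c).exp_left.eq, mul_apply_eq_comp, hx]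

lemma IsSelfAdjoint.exp_I_mul_ofReal_smul_mem_unitary {A : Type*} [NormedRing A]
    [NormedAlgebra ℂ A] [StarRing A] [ContinuousStar A] [CompleteSpace A] [StarModule ℂ A]
    {a : A} (ha : IsSelfAdjoint a) (s : ℝ) : NormedSpace.exp ((I * s) • a) ∈ unitary A := by
  have h := (selfAdjoint.expUnitary (s • (⟨a, ha⟩ : selfAdjoint A))).prop
  rwa [selfAdjoint.expUnitary_coe, selfAdjoint.val_smul, smul_comm, ← smul_assoc,
    Complex.real_smul, mul_comm] at h

section Hilbert

variable {ℋ : Type*} [NormedAddCommGroup ℋ] [InnerProductSpace ℂ ℋ] [CompleteSpace ℋ]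

lemma IsSelfAdjoint.norm_exp_I_mul_ofReal_smul_apply {H : ℋ →L[ℂ] ℋ} (hH : IsSelfAdjoint H)
    (s : ℝ) (x : ℋ) : ‖NormedSpace.exp ((I * s) • H) x‖ = ‖x‖ :=
  norm_map_of_mem_unitary (hH.exp_I_mul_ofReal_smul_mem_unitary s) x

lemma IsSelfAdjoint.norm_exp_neg_I_mul_ofReal_smul_apply {H : ℋ →L[ℂ] ℋ} (hH : IsSelfAdjoint H)
    (s : ℝ) (x : ℋ) : ‖NormedSpace.exp ((-(I * s)) • H) x‖ = ‖x‖ := by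
  simpa using hH.norm_exp_I_mul_ofReal_smul_apply (-s) x

theorem IsSelfAdjoint.norm_apply_exp_sub_exp_apply_le {H : ℋ →L[ℂ] ℋ} (hH : IsSelfAdjoint H)
    (B : ℋ →L[ℂ] ℋ) (x : ℋ) {M : ℝ}
    (hM : ∀ s : ℝ, ‖(H * B - B * H) (NormedSpace.exp ((-(I * s)) • H) x)‖ ≤ M) (t : ℝ) :
    ‖B (NormedSpace.exp ((-(I * t)) • H) x) - NormedSpace.exp ((-(I * t)) • H) (B x)‖ ≤
      M * |t| := by
  set U : ℝ → ℋ →L[ℂ] ℋ := fun s => NormedSpace.exp ((-(I * s)) • H)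
  set V : ℝ → ℋ →L[ℂ] ℋ := fun s => NormedSpace.exp ((I * s) • H)
  have hderiv : ∀ s : ℝ, HasDerivAt (fun u => (V u * B * U u) x)
      (I • V s ((H * B - B * H) (U s x))) s := fun s =>
    ((ContinuousLinearMap.apply ℂ ℋ x).restrictScalars ℝ).hasFDerivAt.comp_hasDerivAt s
      (hasDerivAt_exp_conj H B s)
  have hbound : ∀ s : ℝ, ‖I • V s ((H * B - B * H) (U s x))‖ ≤ M := fun s => by
    rw [norm_smul, Complex.norm_I, one_mul, hH.norm_exp_I_mul_ofReal_smul_apply]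
    exact hM s
  have hVU : ∀ s, V s * U s = 1 := fun s => exp_smul_mul_exp_neg_smul _ H
  have hmvt := convex_univ.norm_image_sub_le_of_norm_hasDerivWithin_le
    (fun s _ => (hderiv s).hasDerivWithinAt) (fun s _ => hbound s) (Set.mem_univ 0)
    (Set.mem_univ t)
  have hV0 : V 0 = 1 := by simp [V]
  have hU0 : U 0 = 1 := by simp [U]
  calc ‖B (U t x) - U t (B x)‖ = ‖V t (B (U t x) - U t (B x))‖ :=
        (hH.norm_exp_I_mul_ofReal_smul_apply t _).symm
    _ = ‖(V t * B * U t) x - (V 0 * B * U 0) x‖ := by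
        rw [map_sub, ← mul_apply_eq_comp (V t) (U t), hVU, hV0, hU0]; simp
    _ ≤ M * |t| := by simpa using hmvt

end Hilbert

theorem almost_invariant_subspace_dynamics_general
    {ℋ : Type*} [NormedAddCommGroup ℋ] [InnerProductSpace ℂ ℋ] [CompleteSpace ℋ]
    (Hop P χ : ℋ →L[ℂ] ℋ) (C ε : ℝ)
    (hH : IsSelfAdjoint Hop)
    -- `χ` is the spectral cutoff `χ_{(-∞,E_max]}(H^ε)`: an orthogonal projection
    -- commuting with `H^ε`, on whose range `H^ε` is bounded by `E_max`
    (hχcomm : Hop ∘L χ = χ ∘L Hop)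
    -- almost-invariance: `‖[P, H^ε] χ_{(-∞,E_max]}(H^ε)‖ ≤ C ε³`
    (hinv : ‖(P ∘L Hop - Hop ∘L P) ∘L χ‖ ≤ C * ε ^ 3)
    -- a normalized state in `Ran χ ∩ Ran P`
    (ψ : ℋ) (hψ : ‖ψ‖ = 1) (hψχ : χ ψ = ψ) (hψP : P ψ = ψ) :
    ∀ t : ℝ,
      ‖(NormedSpace.exp ((-(Complex.I * t)) • Hop)) ψ -
        P ((NormedSpace.exp ((-(Complex.I * t)) • Hop)) ψ)‖ ≤ C * ε ^ 3 * |t| := by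
  intro t
  have hcomm (s : ℝ) :
      ‖(Hop * (1 - P) - (1 - P) * Hop) (exp ((-(I * s)) • Hop) ψ)‖ ≤ C * ε ^ 3 := by
    have hχ : Commute Hop χ := hχcomm
    calc _ = ‖((P ∘L Hop - Hop ∘L P) ∘L χ) (exp ((-(I * s)) • Hop) ψ)‖ := by
          rw [comp_apply, hχ.apply_exp_smul_apply_eq_self _ hψχ]
          simp [mul_sub, sub_mul]
      _ ≤ C * ε ^ 3 * ‖exp ((-(I * s)) • Hop) ψ‖ := le_of_opNorm_le _ hinv _
      _ = C * ε ^ 3 := by rw [hH.norm_exp_neg_I_mul_ofReal_smul_apply, hψ, mul_one]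
  simpa [hψP] using hH.norm_apply_exp_sub_exp_apply_le (1 - P) ψ hcomm t

/-- if `‖[P,H^ε] χ_{(-∞,E_max]}(H^ε)‖ ≤ Cε³`, then states starting in
`Ran χ_{(-∞,E_max]}(H^ε) ∩ Ran P` stay in `Ran P` up to errors `Cε³|t|` under the
time evolution `e^{-iH^ε t}`. -/
theorem almost_invariant_subspace_dynamics
    {ℋ : Type*} [NormedAddCommGroup ℋ] [InnerProductSpace ℂ ℋ] [CompleteSpace ℋ]
    (Hop P χ : ℋ →L[ℂ] ℋ) (C ε ε₀ Emax : ℝ) (hC : 0 < C) (hε : 0 < ε) (hεε₀ : ε < ε₀)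
    (hH : IsSelfAdjoint Hop)
    (hPsa : IsSelfAdjoint P) (hPproj : P ∘L P = P)
    -- `χ` is the spectral cutoff `χ_{(-∞,E_max]}(H^ε)`: an orthogonal projection
    -- commuting with `H^ε`, on whose range `H^ε` is bounded by `E_max`
    (hχsa : IsSelfAdjoint χ) (hχproj : χ ∘L χ = χ) (hχcomm : Hop ∘L χ = χ ∘L Hop)
    (hχE : ∀ ψ, χ ψ = ψ → (Complex.re ⟪ψ, Hop ψ⟫_ℂ) ≤ Emax * ‖ψ‖ ^ 2)
    -- almost-invariance: `‖[P, H^ε] χ_{(-∞,E_max]}(H^ε)‖ ≤ C ε³`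
    (hinv : ‖(P ∘L Hop - Hop ∘L P) ∘L χ‖ ≤ C * ε ^ 3)
    -- a normalized state in `Ran χ ∩ Ran P`
    (ψ : ℋ) (hψ : ‖ψ‖ = 1) (hψχ : χ ψ = ψ) (hψP : P ψ = ψ) :
    ∀ t : ℝ,
      ‖(NormedSpace.exp ((-(Complex.I * t)) • Hop)) ψ -
        P ((NormedSpace.exp ((-(Complex.I * t)) • Hop)) ψ)‖ ≤ C * ε ^ 3 * |t| :=
  almost_invariant_subspace_dynamics_general Hop P χ C ε hH hχcomm hinv ψ hψ hψχ hψP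
end

section
/- Let P be an orthogonal projection on a Hilbert space and P^ε = P + εP¹ + ε²P² a symmetric operator with (P^ε)² = P^ε + O(ε³) in operator norm, where P¹, P² are bounded and symmetric. Then for ε small enough there exists a true orthogonal projection Q^ε with ‖Q^ε - P^ε‖ = O(ε³), obtained via the spectral projection of P^ε onto the spectrum near 1. -/
/-!
A self-adjoint `a` with `‖a * a - a‖ ≤ δ ≤ 1/8` has its spectrum inside `|x² - x| ≤ δ`, which
splits into a `2δ`-neighbourhood of `0` and one of `1`. A continuous function equal to `0` on the
first piece and `1` on the second turns `a`, through the continuous functional calculus, into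
the spectral projection of `a` onto the part of its spectrum near `1` (the Riesz projection), at
distance at most `2δ` from `a`.
-/

lemma abs_le_or_abs_sub_one_le_of_abs_mul_self_sub_le {δ x : ℝ} (hδ : δ ≤ 1 / 8)
    (h : |x * x - x| ≤ δ) :
    (x ≤ 1 / 4 ∧ |x| ≤ 2 * δ) ∨ (3 / 4 ≤ x ∧ |x - 1| ≤ 2 * δ) := by
  rw [abs_le] at h
  by_cases hx : x ≤ 1 / 4
  · exact .inl ⟨hx, abs_le.2 ⟨by nlinarith, by nlinarith⟩⟩
  · have h34 : 3 / 4 ≤ x := by nlinarith [sq_nonneg (x - 1 / 2)]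
    exact .inr ⟨h34, abs_le.2 ⟨by nlinarith, by nlinarith⟩⟩

section CStarAlgebra

variable {A : Type*} [CStarAlgebra A] {a : A}

lemma IsSelfAdjoint.abs_mul_self_sub_le_norm (ha : IsSelfAdjoint a) {x : ℝ}
    (hx : x ∈ spectrum ℝ a) : |x * x - x| ≤ ‖a * a - a‖ := by
  obtain _ | _ := subsingleton_or_nontrivial A
  · simp [spectrum.of_subsingleton] at hx
  have hcfc : cfc (fun y : ℝ => y * y - y) a = a * a - a := by
    rw [cfc_sub _ _ a, cfc_mul _ _ a, cfc_id' ℝ a]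
  have hmem : x * x - x ∈ spectrum ℝ (a * a - a) := by
    rw [← hcfc, cfc_map_spectrum (fun y : ℝ => y * y - y) a ha]
    exact ⟨x, hx, rfl⟩
  exact spectrum.norm_le_norm_of_mem hmem

theorem IsSelfAdjoint.exists_isStarProjection_norm_sub_le (ha : IsSelfAdjoint a)
    (h : ‖a * a - a‖ ≤ 1 / 8) :
    ∃ q : A, IsStarProjection q ∧ ‖q - a‖ ≤ 2 * ‖a * a - a‖ := by
  set f : ℝ → ℝ := fun x => min 1 (max 0 (2 * x - 1 / 2))
  have hf : ∀ x ∈ spectrum ℝ a,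
      (f x = 0 ∧ |x| ≤ 2 * ‖a * a - a‖) ∨ (f x = 1 ∧ |x - 1| ≤ 2 * ‖a * a - a‖) := by
    intro x hx
    rcases abs_le_or_abs_sub_one_le_of_abs_mul_self_sub_le h
        (ha.abs_mul_self_sub_le_norm hx) with ⟨hx0, hnear⟩ | ⟨hx1, hnear⟩
    · exact .inl ⟨by simp only [f]; rw [max_eq_left (by linarith), min_eq_right zero_le_one],
        hnear⟩
    · exact .inr ⟨by simp only [f]; rw [max_eq_right (by linarith), min_eq_left (by linarith)],
        hnear⟩
  have hidem : IsIdempotentElem (cfc f a) := by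
    rw [IsIdempotentElem, ← cfc_mul f f a]
    refine cfc_congr fun x hx => ?_
    rcases hf x hx with ⟨hfx, -⟩ | ⟨hfx, -⟩ <;> simp [hfx]
  refine ⟨cfc f a, ⟨hidem, cfc_predicate f a⟩, ?_⟩
  have hsub : cfc f a - a = cfc (fun x => f x - x) a := by rw [cfc_sub f _ a, cfc_id' ℝ a]
  rw [hsub]
  refine norm_cfc_le (by positivity) fun x hx => ?_
  rcases hf x hx with ⟨hfx, hnear⟩ | ⟨hfx, hnear⟩
  · simpa [hfx] using hnear
  · simpa [hfx, abs_sub_comm] using hnear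

end CStarAlgebra

theorem superadiabatic_projection_exists_general
    {ℋ : Type*} [NormedAddCommGroup ℋ] [InnerProductSpace ℂ ℋ] [CompleteSpace ℋ]
    (P P1 P2 : ℋ →L[ℂ] ℋ) (C ε₀ : ℝ) (hC : 0 < C) (hε₀ : 0 < ε₀)
    (hPsa : IsSelfAdjoint P)
    (hP1sa : IsSelfAdjoint P1) (hP2sa : IsSelfAdjoint P2)
    (halmost : ∀ ε : ℝ, 0 < ε → ε ≤ ε₀ →
      ‖(P + ε • P1 + ε ^ 2 • P2) ∘L (P + ε • P1 + ε ^ 2 • P2)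
          - (P + ε • P1 + ε ^ 2 • P2)‖ ≤ C * ε ^ 3) :
    ∃ C' ε₁ : ℝ, 0 < C' ∧ 0 < ε₁ ∧ ∀ ε : ℝ, 0 < ε → ε ≤ ε₁ →
      ∃ Q : ℋ →L[ℂ] ℋ, IsSelfAdjoint Q ∧ Q ∘L Q = Q ∧
        ‖Q - (P + ε • P1 + ε ^ 2 • P2)‖ ≤ C' * ε ^ 3 := by
  refine ⟨2 * C, min ε₀ (min 1 (1 / (8 * C))), by positivity, by positivity, fun ε hε hε₁ => ?_⟩
  have hεε₀ : ε ≤ ε₀ := hε₁.trans (min_le_left _ _)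
  have hε1 : ε ≤ 1 := hε₁.trans ((min_le_right _ _).trans (min_le_left _ _))
  have hε8C : ε ≤ 1 / (8 * C) := hε₁.trans ((min_le_right _ _).trans (min_le_right _ _))
  have hsmall : C * ε ^ 3 ≤ 1 / 8 :=
    calc C * ε ^ 3 ≤ C * ε := by gcongr; exact pow_le_of_le_one hε.le hε1 (by norm_num)
      _ ≤ C * (1 / (8 * C)) := by gcongr
      _ = 1 / 8 := by field_simp
  set a := P + ε • P1 + ε ^ 2 • P2
  have hsa : IsSelfAdjoint a :=
    (hPsa.add ((IsSelfAdjoint.all ε).smul hP1sa)).add ((IsSelfAdjoint.all _).smul hP2sa)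
  have hdefect : ‖a * a - a‖ ≤ C * ε ^ 3 := halmost ε hε hεε₀
  obtain ⟨Q, hQ, hdist⟩ := hsa.exists_isStarProjection_norm_sub_le (hdefect.trans hsmall)
  exact ⟨Q, hQ.isSelfAdjoint, hQ.isIdempotentElem, hdist.trans (by linarith)⟩

/-- if `P^ε = P + εP¹ + ε²P²` is a symmetric almost-projection,
`‖(P^ε)² - P^ε‖ ≤ Cε³` for `ε ≤ ε₀`, then for small `ε` there is a true orthogonal
projection `Q^ε` (the Riesz spectral projection of `P^ε` near `1`) with
`‖Q^ε - P^ε‖ = O(ε³)`. -/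
theorem superadiabatic_projection_exists
    {ℋ : Type*} [NormedAddCommGroup ℋ] [InnerProductSpace ℂ ℋ] [CompleteSpace ℋ]
    (P P1 P2 : ℋ →L[ℂ] ℋ) (C ε₀ : ℝ) (hC : 0 < C) (hε₀ : 0 < ε₀)
    (hPsa : IsSelfAdjoint P) (hPproj : P ∘L P = P)
    (hP1sa : IsSelfAdjoint P1) (hP2sa : IsSelfAdjoint P2)
    (halmost : ∀ ε : ℝ, 0 < ε → ε ≤ ε₀ →
      ‖(P + ε • P1 + ε ^ 2 • P2) ∘L (P + ε • P1 + ε ^ 2 • P2)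
          - (P + ε • P1 + ε ^ 2 • P2)‖ ≤ C * ε ^ 3) :
    ∃ C' ε₁ : ℝ, 0 < C' ∧ 0 < ε₁ ∧ ∀ ε : ℝ, 0 < ε → ε ≤ ε₁ →
      ∃ Q : ℋ →L[ℂ] ℋ, IsSelfAdjoint Q ∧ Q ∘L Q = Q ∧
        ‖Q - (P + ε • P1 + ε ^ 2 • P2)‖ ≤ C' * ε ^ 3 :=
  superadiabatic_projection_exists_general P P1 P2 C ε₀ hC hε₀ hPsa hP1sa hP2sa halmost
end

section
/- Let H be self-adjoint, bounded below, on ℋ, and H_eff self-adjoint on ℋ' with unitary U: 𝒫 → ℋ' from Ran(P) ⊂ ℋ. Suppose ‖(H U* - U* H_eff)χ(H_eff)‖ ≤ δ for a bounded spectral cutoff χ. Then for all t ∈ ℝ, ‖(e^{-iHt} U* - U* e^{-iH_eff t})χ(H_eff)‖ ≤ δ|t|. -/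
/-!
`W u = exp ((z - u) • X) ∘ V ∘ exp (u • Y) ∘ χ` runs from `exp (z • X) ∘ V ∘ χ` at `u = 0` to
`V ∘ exp (z • Y) ∘ χ` at `u = z`. Because `χ` commutes with `Y`, its derivative is
`-exp ((z - u) • X) ∘ (X ∘ V - V ∘ Y) ∘ χ ∘ exp (u • Y)`, so when both exponentials are
contractions along the segment `[0, z]` the mean value inequality bounds the difference by
`‖(X ∘ V - V ∘ Y) ∘ χ‖ * ‖z‖`. For `X = H`, `Y = H_eff` and `z = -i t` the exponentials are
unitary.
-/

open ContinuousLinearMap NormedSpace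

theorem sub_mem_segment_zero {R E : Type*} [Ring R] [PartialOrder R] [AddCommGroup E]
    [Module R E] {z w : E} (hw : w ∈ segment R 0 z) : z - w ∈ segment R 0 z := by
  obtain ⟨a, b, ha, hb, hab, rfl⟩ := hw
  refine ⟨b, a, hb, ha, by rw [add_comm, hab], ?_⟩
  rw [smul_zero, smul_zero, zero_add, zero_add, eq_sub_iff_add_eq, ← add_smul, hab, one_smul]

section Duhamel

variable {𝕜 E F : Type*} [RCLike 𝕜]
  [NormedAddCommGroup E] [NormedSpace 𝕜 E] [CompleteSpace E]
  [NormedAddCommGroup F] [NormedSpace 𝕜 F] [CompleteSpace F]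
  (X : E →L[𝕜] E) (Y : F →L[𝕜] F) (V : F →L[𝕜] E) (χ : F →L[𝕜] F)

theorem hasDerivAt_exp_smul_comp_exp_smul (hχ : Commute Y χ) (z w : 𝕜) :
    HasDerivAt (fun u : 𝕜 => exp ((z - u) • X) ∘L V ∘L exp (u • Y) ∘L χ)
      (-(exp ((z - w) • X) ∘L ((X ∘L V - V ∘L Y) ∘L χ) ∘L exp (w • Y))) w := by
  have hX : HasDerivAt (fun u : 𝕜 => exp ((z - u) • X)) (-(exp ((z - w) • X) * X)) w := by
    simpa only [Function.comp_def, neg_one_smul] using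
      (hasDerivAt_exp_smul_const X (z - w)).scomp w ((hasDerivAt_id w).const_sub z)
  have hY : HasDerivAt (fun u : 𝕜 => exp (u • Y)) (exp (w • Y) * Y) w :=
    hasDerivAt_exp_smul_const Y w
  convert hX.clm_comp ((hasDerivAt_const w V).clm_comp (hY.clm_comp (hasDerivAt_const w χ)))
    using 1
  have hχexp : exp (w • Y) ∘L χ = χ ∘L exp (w • Y) := (hχ.smul_left w).exp_left
  have hYexp : exp (w • Y) ∘L Y = Y ∘L exp (w • Y) := ((Commute.refl Y).smul_left w).exp_left
  simp only [mul_def, zero_comp, comp_zero, add_zero, zero_add, neg_comp, sub_comp, comp_sub,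
    comp_assoc, hχexp, hYexp]
  abel

theorem norm_exp_smul_comp_sub_comp_exp_smul_le (hχ : Commute Y χ) (z : 𝕜)
    (hX : ∀ w ∈ segment ℝ 0 z, ‖exp (w • X)‖ ≤ 1) (hY : ∀ w ∈ segment ℝ 0 z, ‖exp (w • Y)‖ ≤ 1) :
    ‖(exp (z • X) ∘L V - V ∘L exp (z • Y)) ∘L χ‖ ≤ ‖(X ∘L V - V ∘L Y) ∘L χ‖ * ‖z‖ := by
  have key := (convex_segment (0 : 𝕜) z).norm_image_sub_le_of_norm_hasDerivWithin_le
    (C := ‖(X ∘L V - V ∘L Y) ∘L χ‖)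
    (fun w _ => (hasDerivAt_exp_smul_comp_exp_smul X Y V χ hχ z w).hasDerivWithinAt)
    (fun w hw => ?_) (left_mem_segment ℝ 0 z) (right_mem_segment ℝ 0 z)
  · simpa [norm_sub_rev, sub_comp, comp_assoc, one_def] using key
  · rw [norm_neg]
    calc _ ≤ ‖exp ((z - w) • X)‖ * (‖(X ∘L V - V ∘L Y) ∘L χ‖ * ‖exp (w • Y)‖) :=
          (opNorm_comp_le _ _).trans (by gcongr; exact opNorm_comp_le _ _)
      _ ≤ 1 * (‖(X ∘L V - V ∘L Y) ∘L χ‖ * 1) := by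
          gcongr
          exacts [hX _ (sub_mem_segment_zero hw), hY w hw]
      _ = _ := by ring

end Duhamel

theorem IsSelfAdjoint.norm_exp_smul_le_one {A : Type*} [CStarAlgebra A] {a : A}
    (ha : IsSelfAdjoint a) {w : ℂ} (hw : w.re = 0) : ‖NormedSpace.exp (w • a)‖ ≤ 1 := by
  let +nondep : NormedAlgebra ℚ A := .restrictScalars ℚ ℂ A
  have hw' : w ∈ skewAdjoint ℂ := by
    rw [skewAdjoint.mem_iff]
    apply Complex.ext <;> simp [hw]
  have hu := exp_mem_unitary_of_mem_skewAdjoint (ha.smul_mem_skewAdjoint hw')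
  nontriviality A
  exact (CStarRing.norm_of_mem_unitary hu).le

theorem duhamel_intertwining_dynamics_general
    {ℋ ℋ' : Type*} [NormedAddCommGroup ℋ] [InnerProductSpace ℂ ℋ] [CompleteSpace ℋ]
    [NormedAddCommGroup ℋ'] [InnerProductSpace ℂ ℋ'] [CompleteSpace ℋ']
    (H : ℋ →L[ℂ] ℋ) (Heff : ℋ' →L[ℂ] ℋ') (V : ℋ' →L[ℂ] ℋ) (χ : ℋ' →L[ℂ] ℋ')
    (δ : ℝ)
    (hH : IsSelfAdjoint H) (hHeff : IsSelfAdjoint Heff)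
    -- `χ = χ(H_eff)` commutes with `H_eff`
    (hχcomm : Heff ∘L χ = χ ∘L Heff)
    -- intertwining estimate on the energy range of the cutoff
    (hint : ‖(H ∘L V - V ∘L Heff) ∘L χ‖ ≤ δ) :
    ∀ t : ℝ,
      ‖((NormedSpace.exp ((-(Complex.I * t)) • H)) ∘L V -
          V ∘L (NormedSpace.exp ((-(Complex.I * t)) • Heff))) ∘L χ‖
        ≤ δ * |t| := by
  intro t
  have hre : ∀ w ∈ segment ℝ 0 (-(Complex.I * t)), w.re = 0 :=
    (convex_hyperplane Complex.reLm.isLinear 0).segment_subset (by simp) (by simp)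
  calc _ ≤ ‖(H ∘L V - V ∘L Heff) ∘L χ‖ * ‖-(Complex.I * t)‖ :=
        norm_exp_smul_comp_sub_comp_exp_smul_le H Heff V χ hχcomm _
          (fun w hw => hH.norm_exp_smul_le_one (hre w hw))
          (fun w hw => hHeff.norm_exp_smul_le_one (hre w hw))
    _ ≤ δ * |t| := by
        rw [norm_neg, norm_mul, Complex.norm_I, one_mul, Complex.norm_real, Real.norm_eq_abs]
        exact mul_le_mul_of_nonneg_right hint (abs_nonneg t)

/-- Duhamel: if `‖(H U* - U* H_eff) χ(H_eff)‖ ≤ δ` for a bounded spectral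
cutoff `χ` commuting with `H_eff`, then the corresponding unitary groups stay `δ|t|`-close
on the range of the cutoff: `‖(e^{-iHt} U* - U* e^{-iH_eff t}) χ(H_eff)‖ ≤ δ|t|`.
Here `V = U* : ℋ' → ℋ`. -/
theorem duhamel_intertwining_dynamics
    {ℋ ℋ' : Type*} [NormedAddCommGroup ℋ] [InnerProductSpace ℂ ℋ] [CompleteSpace ℋ]
    [NormedAddCommGroup ℋ'] [InnerProductSpace ℂ ℋ'] [CompleteSpace ℋ']
    (H : ℋ →L[ℂ] ℋ) (Heff : ℋ' →L[ℂ] ℋ') (V : ℋ' →L[ℂ] ℋ) (χ : ℋ' →L[ℂ] ℋ')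
    (δ : ℝ) (hδ : 0 ≤ δ)
    (hH : IsSelfAdjoint H) (hHeff : IsSelfAdjoint Heff)
    -- `V = U*` is an isometry from `ℋ'` into `ℋ` (onto `𝒫`)
    (hVisom : (ContinuousLinearMap.adjoint V) ∘L V = 1)
    -- `χ = χ(H_eff)` commutes with `H_eff`
    (hχcomm : Heff ∘L χ = χ ∘L Heff)
    -- intertwining estimate on the energy range of the cutoff
    (hint : ‖(H ∘L V - V ∘L Heff) ∘L χ‖ ≤ δ) :
    ∀ t : ℝ,
      ‖((NormedSpace.exp ((-(Complex.I * t)) • H)) ∘L V -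
          V ∘L (NormedSpace.exp ((-(Complex.I * t)) • Heff))) ∘L χ‖
        ≤ δ * |t| :=
  duhamel_intertwining_dynamics_general H Heff V χ δ hH hHeff hχcomm hint
end
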